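/- Let $l \ge 2$, let $S = \{i_1 < \cdots < i_k\} \subseteq \{1,\dots,l-1\}$, and define $\mu_S \in \mathbb{R}^l$ by $\mu_S = \sum_{j=1}^{k} h_{i_j}\, \omega_{i_j}$ where $h_{i_j} = i_j + 2\sum_{s=j+1}^{k}(-1)^{s-j} i_s + (-1)^{k-j+1}(l - \tfrac{1}{2})$ and $\omega_i = \epsilon_1 + \cdots + \epsilon_i$ for $i \le l-1$. Then for every pair $1 \le i < j \le l$, the quantity $(\bar\rho + \mu_S,\ \epsilon_i - \epsilon_j)$ is strictly positive whenever $(\mu_S, \epsilon_i - \epsilon_j)$ is an integer, where $\bar\rho = \sum_{i=1}^{l}(l-i+\tfrac{1}{2})\epsilon_i$. -/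

import Mathlib

noncomputable section

/-- Standard dot product on `ℝ^l`. -/
def dotR {l : ℕ} (u v : Fin l → ℝ) : ℝ := ∑ t, u t * v t

/-- The standard basis vector `ε_i` of `ℝ^l`. -/
def epsR {l : ℕ} (i : Fin l) : Fin l → ℝ := fun t => if t = i then 1 else 0

/-- `ρ̄ = ∑ᵢ (l - i + 1/2) εᵢ` (0-indexed). -/
def rhoBarR (l : ℕ) : Fin l → ℝ := fun t => (l : ℝ) - (t : ℕ) - 1 / 2

end

/-!
Write `h_j` for the coefficient of `ω_{i_j}`. The pairing with `ε_a - ε_b` picks out the block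
`h_p + ⋯ + h_{q-1}` of those `j` with `a < i_j ≤ b`. Each `h_j` lies in `ℤ + 1/2`, so the block
sum is an integer only for an even block, and for consecutive indices the alternating sums cancel:
`h_j + h_{j+1} = i_j - i_{j+1}`. An even block therefore sums to
`(i_p - i_{p+1}) + (i_{p+2} - i_{p+3}) + ⋯ ≥ i_p - i_{q-1} ≥ a + 1 - b`, while `ρ̄` contributes
`b - a`.
-/

open Finset

lemma dotR_epsR_sub {l : ℕ} (u : Fin l → ℝ) (a b : Fin l) :
    dotR u (epsR a - epsR b) = u a - u b := by
  simp [dotR, epsR, mul_sub, sum_sub_distrib]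

lemma exists_le_iff_of_upwardClosed {k : ℕ} {P : ℕ → Prop}
    (hP : ∀ m j, m ≤ j → j < k → P m → P j) : ∃ p ≤ k, ∀ j < k, P j ↔ p ≤ j := by
  classical
  have hex : ∃ p, k ≤ p ∨ P p := ⟨k, Or.inl le_rfl⟩
  refine ⟨Nat.find hex, Nat.find_min' hex (Or.inl le_rfl), fun j hj =>
    ⟨fun hPj => Nat.find_min' hex (Or.inr hPj), fun hpj => ?_⟩⟩
  rcases Nat.find_spec hex with hk | hPp
  · omega
  · exact hP _ _ hpj hj hPp

lemma sum_range_ite_eq_sum_Ico {k p : ℕ} {P : ℕ → Prop} [DecidablePred P]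
    (hP : ∀ j < k, P j ↔ p ≤ j) (g : ℕ → ℝ) :
    ∑ j ∈ range k, (if P j then g j else 0) = ∑ j ∈ Ico p k, g j := by
  rw [← sum_filter]
  congr 1
  ext j
  simp only [mem_filter, mem_range, mem_Ico]
  constructor
  · rintro ⟨hjk, hPj⟩
    exact ⟨(hP j hjk).1 hPj, hjk⟩
  · rintro ⟨hpj, hjk⟩
    exact ⟨hjk, (hP j hjk).2 hpj⟩

lemma even_card_of_sum_eq_int {α : Type*} {s : Finset α} {g : α → ℝ}
    (hg : ∀ x ∈ s, ∃ z : ℤ, g x = z + 1 / 2) (hs : ∃ z : ℤ, ∑ x ∈ s, g x = z) :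
    Even s.card := by
  choose! w hw using hg
  obtain ⟨z, hz⟩ := hs
  have hsum : ∑ x ∈ s, g x = ((∑ x ∈ s, w x : ℤ) : ℝ) + s.card / 2 := by
    rw [sum_congr rfl hw, sum_add_distrib, sum_const, nsmul_eq_mul]
    push_cast
    ring
  have hcard : (s.card : ℤ) = 2 * (z - ∑ x ∈ s, w x) := by
    have : ((s.card : ℤ) : ℝ) = ((2 * (z - ∑ x ∈ s, w x) : ℤ) : ℝ) := by
      push_cast at hsum ⊢
      linarith
    exact_mod_cast this
  exact Int.even_coe_nat _ |>.1 ⟨_, hcard.trans (two_mul _)⟩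

lemma neg_one_pow_sub_of_lt {j m : ℕ} (h : j < m) :
    (-1 : ℝ) ^ (m - j) = -(-1) ^ (m - (j + 1)) := by
  rw [show m - j = m - (j + 1) + 1 by omega, pow_succ]
  ring

noncomputable def muCoeff (l k : ℕ) (i : ℕ → ℕ) (j : ℕ) : ℝ :=
  (i j : ℝ) + 2 * ∑ s ∈ Ico (j + 1) k, (-1 : ℝ) ^ (s - j) * (i s : ℝ)
    + (-1 : ℝ) ^ (k - j) * ((l : ℝ) - 1 / 2)

section muCoeff

variable {l k : ℕ} {i : ℕ → ℕ}

lemma exists_muCoeff_eq_int_add_half (j : ℕ) : ∃ z : ℤ, muCoeff l k i j = z + 1 / 2 := by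
  have hsign : ∃ w : ℤ, (-1 : ℝ) ^ (k - j) * ((l : ℝ) - 1 / 2) = w + 1 / 2 := by
    rcases Nat.even_or_odd (k - j) with he | ho
    · exact ⟨l - 1, by rw [he.neg_one_pow]; push_cast; ring⟩
    · exact ⟨-l, by rw [ho.neg_one_pow]; push_cast; ring⟩
  obtain ⟨w, hw⟩ := hsign
  refine ⟨i j + 2 * ∑ s ∈ Ico (j + 1) k, (-1 : ℤ) ^ (s - j) * (i s : ℤ) + w, ?_⟩
  rw [muCoeff, hw]
  push_cast
  ring

lemma muCoeff_add_muCoeff_succ {j : ℕ} (hj : j + 1 < k) :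
    muCoeff l k i j + muCoeff l k i (j + 1) = (i j : ℝ) - i (j + 1) := by
  have htail : ∑ s ∈ Ico (j + 1 + 1) k, (-1 : ℝ) ^ (s - j) * (i s : ℝ)
      = -∑ s ∈ Ico (j + 1 + 1) k, (-1 : ℝ) ^ (s - (j + 1)) * (i s : ℝ) := by
    rw [← sum_neg_distrib]
    refine sum_congr rfl fun s hs => ?_
    rw [neg_one_pow_sub_of_lt (by simp at hs; omega : j < s)]
    ring
  simp only [muCoeff]
  rw [sum_eq_sum_Ico_succ_bot hj, htail, neg_one_pow_sub_of_lt (by omega : j < k),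
    Nat.add_sub_cancel_left]
  ring

lemma sub_le_sum_muCoeff_Ico (hmono : ∀ a b, a < b → b < k → i a < i b) (p : ℕ) :
    ∀ n, p + 2 * n + 2 ≤ k →
      (i p : ℝ) - i (p + 2 * n + 1) ≤ ∑ j ∈ Ico p (p + 2 * n + 2), muCoeff l k i j := by
  intro n
  induction n with
  | zero =>
    intro hk
    rw [sum_Ico_succ_top (by omega), sum_Ico_succ_top (by omega), Ico_self, sum_empty, zero_add,
      muCoeff_add_muCoeff_succ (by omega)]
  | succ n ih =>
    intro hk
    have hstep : (i (p + 2 * n + 1) : ℝ) ≤ i (p + 2 * n + 2) := by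
      exact_mod_cast (hmono _ _ (by omega) (by omega)).le
    rw [show p + 2 * (n + 1) + 2 = p + 2 * n + 2 + 1 + 1 by ring,
      show p + 2 * (n + 1) + 1 = p + 2 * n + 2 + 1 by ring,
      sum_Ico_succ_top (by omega), sum_Ico_succ_top (by omega)]
    have hpair := muCoeff_add_muCoeff_succ (l := l) (k := k) (i := i) (j := p + 2 * n + 2)
      (by omega)
    linarith [ih (by omega)]

lemma zero_lt_sub_add_sum_muCoeff_Ico (hmono : ∀ a b, a < b → b < k → i a < i b)
    {a b p q : ℕ} (hab : a < b) (hp : ∀ j < k, a < i j ↔ p ≤ j) (hq : ∀ j < k, b < i j ↔ q ≤ j)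
    (hpq : p ≤ q) (hqk : q ≤ k) (heven : Even (q - p)) :
    0 < (b : ℝ) - a + ∑ j ∈ Ico p q, muCoeff l k i j := by
  have hba : (a : ℝ) < b := by exact_mod_cast hab
  obtain ⟨n, hn⟩ := heven
  rcases n with _ | m
  · rw [show q = p by omega, Ico_self, sum_empty]
    linarith
  · have hblock := sub_le_sum_muCoeff_Ico (l := l) hmono p m (by omega)
    rw [show p + 2 * m + 2 = q by omega] at hblock
    have hfirst : (a + 1 : ℝ) ≤ i p := by exact_mod_cast (hp p (by omega)).2 le_rfl
    have hlast : (i (p + 2 * m + 1) : ℝ) ≤ b := by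
      refine Nat.cast_le.2 (not_lt.1 fun h' => ?_)
      have := (hq _ (by omega)).1 h'
      omega
    linarith

end muCoeff

theorem stmt_16_general (l k : ℕ) (i : ℕ → ℕ)
    (hmono : ∀ a b, a < b → b < k → i a < i b) :
    let h : ℕ → ℝ := fun j => (i j : ℝ)
      + 2 * ∑ s ∈ Finset.Ico (j + 1) k, (-1 : ℝ) ^ (s - j) * (i s : ℝ)
      + (-1 : ℝ) ^ (k - j) * ((l : ℝ) - 1 / 2)
    let μS : Fin l → ℝ := fun t => ∑ j ∈ Finset.range k, if (t : ℕ) < i j then h j else 0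
    ∀ a b : Fin l, a < b → (∃ z : ℤ, dotR μS (epsR a - epsR b) = (z : ℝ)) →
      0 < dotR (rhoBarR l + μS) (epsR a - epsR b) := by
  intro h μS a b hab hint
  have hab' : (a : ℕ) < b := hab
  have hupward (t : ℕ) : ∀ m j, m ≤ j → j < k → t < i m → t < i j := fun m j hmj hjk hm =>
    hmj.eq_or_lt.elim (fun e => e ▸ hm) fun hlt => hm.trans (hmono m j hlt hjk)
  have hh : h = muCoeff l k i := rfl
  obtain ⟨p, hpk, hp⟩ := exists_le_iff_of_upwardClosed (hupward a)
  obtain ⟨q, hqk, hq⟩ := exists_le_iff_of_upwardClosed (hupward b)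
  have hpq : p ≤ q := by
    by_contra! hqp
    have := (hq q (by omega)).2 le_rfl
    have := (hp q (by omega)).1 (by omega)
    omega
  have hdiff : μS a - μS b = ∑ j ∈ Ico p q, muCoeff l k i j := by
    simp only [μS, hh, sum_range_ite_eq_sum_Ico hp, sum_range_ite_eq_sum_Ico hq]
    linarith [sum_Ico_consecutive (muCoeff l k i) hpq hqk]
  rw [dotR_epsR_sub, hdiff] at hint
  have heven : Even (q - p) := Nat.card_Ico p q ▸
    even_card_of_sum_eq_int (fun j _ => exists_muCoeff_eq_int_add_half j) hint
  have hrho : rhoBarR l a - rhoBarR l b = (b : ℕ) - (a : ℕ) := by simp [rhoBarR]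
  rw [dotR_epsR_sub, Pi.add_apply, Pi.add_apply, add_sub_add_comm, hdiff, hrho]
  exact zero_lt_sub_add_sum_muCoeff_Ico hmono hab hp hq hpq hqk heven

/-- For `S = {i₁ < ⋯ < i_k} ⊆ {1,…,l-1}` (here `i 0, …, i (k-1)`), with
`h_{i_j} = i_j + 2∑_{s>j}(-1)^{s-j} i_s + (-1)^{k-j+1}(l-1/2)` and
`μ_S = ∑_j h_{i_j} ω_{i_j}` where `ω_i = ε₁ + ⋯ + ε_i`: for all `1 ≤ a < b ≤ l`, if
`(μ_S, ε_a - ε_b)` is an integer then `(ρ̄ + μ_S, ε_a - ε_b) > 0`. -/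
theorem stmt_16 (l k : ℕ) (hl : 2 ≤ l) (i : ℕ → ℕ)
    (hmono : ∀ a b, a < b → b < k → i a < i b)
    (hrange : ∀ j < k, 1 ≤ i j ∧ i j ≤ l - 1) :
    let h : ℕ → ℝ := fun j => (i j : ℝ)
      + 2 * ∑ s ∈ Finset.Ico (j + 1) k, (-1 : ℝ) ^ (s - j) * (i s : ℝ)
      + (-1 : ℝ) ^ (k - j) * ((l : ℝ) - 1 / 2)
    let μS : Fin l → ℝ := fun t => ∑ j ∈ Finset.range k, if (t : ℕ) < i j then h j else 0
    ∀ a b : Fin l, a < b → (∃ z : ℤ, dotR μS (epsR a - epsR b) = (z : ℝ)) →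
      0 < dotR (rhoBarR l + μS) (epsR a - epsR b) :=
  stmt_16_general l k i hmono
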